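/- arXiv:1807.04183 — 2 statements merged into one kernel-verified Lean document; each statement's English description precedes it below -/
import Mathlib

section
/- Let w, w' be probability weight vectors in ℝⁿ with ‖w − w'‖₁ ≤ α‖z − z'‖, let points (Xᵢ,Zᵢ) lie within distance D of (x,z), and define B(x,z) = Σᵢ wᵢ‖(Xᵢ,Zᵢ) − (x,z)‖ (with weights w) and B(x,z') analogously with weights w'. Then |B(x,z) − B(x,z')| ≤ (1 + αD)‖z − z'‖. -/
/-- Concatenation of two Euclidean vectors, viewed in the `ℓ²` product space. -/
noncomputable def pr {d p : ℕ} (a : EuclideanSpace ℝ (Fin d)) (b : EuclideanSpace ℝ (Fin p)) :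
    WithLp 2 (EuclideanSpace ℝ (Fin d) × EuclideanSpace ℝ (Fin p)) :=
  (WithLp.equiv 2 _).symm (a, b)

/-!
Split `B(x,z) − B(x,z') = ∑ (wᵢ − w'ᵢ) dᵢ + ∑ w'ᵢ (dᵢ − d'ᵢ)`, where `dᵢ`, `d'ᵢ` are the distances
to `(x,z)` and `(x,z')`. The first sum is at most `‖w − w'‖₁ D ≤ α D ‖z − z'‖` since `dᵢ ≤ D`; the
second is a convex combination of the `dᵢ − d'ᵢ`, each at most `dist (x,z) (x,z') = ‖z − z'‖` by the
triangle inequality.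
-/

lemma dist_pr_pr_left {d p : ℕ} (x : EuclideanSpace ℝ (Fin d)) (z z' : EuclideanSpace ℝ (Fin p)) :
    dist (pr x z) (pr x z') = dist z z' := by
  simp [pr, WithLp.prod_dist_eq_of_L2]

section WeightedSums

variable {ι : Type*} {s : Finset ι}

lemma abs_sum_sub_mul_le {w w' f : ι → ℝ} {D : ℝ} (hf : ∀ i ∈ s, |f i| ≤ D) :
    |∑ i ∈ s, (w i - w' i) * f i| ≤ (∑ i ∈ s, |w i - w' i|) * D :=
  calc |∑ i ∈ s, (w i - w' i) * f i|
      ≤ ∑ i ∈ s, |w i - w' i| * |f i| := by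
        simpa only [abs_mul] using Finset.abs_sum_le_sum_abs (fun i => (w i - w' i) * f i) s
    _ ≤ ∑ i ∈ s, |w i - w' i| * D :=
        Finset.sum_le_sum fun i hi => mul_le_mul_of_nonneg_left (hf i hi) (abs_nonneg _)
    _ = (∑ i ∈ s, |w i - w' i|) * D := (Finset.sum_mul ..).symm

lemma abs_sum_mul_le_of_sum_eq_one {w g : ι → ℝ} {ε : ℝ} (hw : ∀ i ∈ s, 0 ≤ w i)
    (hws : ∑ i ∈ s, w i = 1) (hg : ∀ i ∈ s, |g i| ≤ ε) :
    |∑ i ∈ s, w i * g i| ≤ ε :=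
  calc |∑ i ∈ s, w i * g i|
      ≤ ∑ i ∈ s, w i * |g i| := by
        refine (Finset.abs_sum_le_sum_abs _ s).trans_eq (Finset.sum_congr rfl fun i hi => ?_)
        rw [abs_mul, abs_of_nonneg (hw i hi)]
    _ ≤ ∑ i ∈ s, w i * ε :=
        Finset.sum_le_sum fun i hi => mul_le_mul_of_nonneg_left (hg i hi) (hw i hi)
    _ = ε := by rw [← Finset.sum_mul, hws, one_mul]

lemma abs_sum_mul_sub_sum_mul_le {w w' f g : ι → ℝ} {D ε : ℝ} (hw' : ∀ i ∈ s, 0 ≤ w' i)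
    (hw's : ∑ i ∈ s, w' i = 1) (hf : ∀ i ∈ s, |f i| ≤ D)
    (hfg : ∀ i ∈ s, |f i - g i| ≤ ε) :
    |∑ i ∈ s, w i * f i - ∑ i ∈ s, w' i * g i| ≤ (∑ i ∈ s, |w i - w' i|) * D + ε := by
  have hsplit : ∑ i ∈ s, w i * f i - ∑ i ∈ s, w' i * g i
      = ∑ i ∈ s, (w i - w' i) * f i + ∑ i ∈ s, w' i * (f i - g i) := by
    rw [← Finset.sum_add_distrib, ← Finset.sum_sub_distrib]
    exact Finset.sum_congr rfl fun i _ => by ring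
  rw [hsplit]
  exact (abs_add_le _ _).trans
    (add_le_add (abs_sum_sub_mul_le hf) (abs_sum_mul_le_of_sum_eq_one hw' hw's hfg))

end WeightedSums

theorem abs_sub_bias_le_of_weights_general {d p n : ℕ} (w w' : Fin n → ℝ)
    (hw' : ∀ i, 0 ≤ w' i)
    (hw's : ∑ i, w' i = 1)
    (X : Fin n → EuclideanSpace ℝ (Fin d)) (Z : Fin n → EuclideanSpace ℝ (Fin p))
    (x : EuclideanSpace ℝ (Fin d)) (z z' : EuclideanSpace ℝ (Fin p))
    (α D : ℝ) (hD : 0 ≤ D)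
    (hdist : ∀ i, dist (pr (X i) (Z i)) (pr x z) ≤ D)
    (hl1 : ∑ i, |w i - w' i| ≤ α * ‖z - z'‖) :
    |(∑ i, w i * dist (pr (X i) (Z i)) (pr x z)) -
        ∑ i, w' i * dist (pr (X i) (Z i)) (pr x z')| ≤ (1 + α * D) * ‖z - z'‖ := by
  have hmove : ∀ i ∈ Finset.univ,
      |dist (pr (X i) (Z i)) (pr x z) - dist (pr (X i) (Z i)) (pr x z')| ≤ ‖z - z'‖ := by
    intro i _
    rw [← dist_eq_norm, ← dist_pr_pr_left x, dist_comm (pr (X i) (Z i)),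
      dist_comm (pr (X i) (Z i))]
    exact abs_dist_sub_le ..
  have hbound : ∀ i ∈ Finset.univ, |dist (pr (X i) (Z i)) (pr x z)| ≤ D := fun i _ => by
    rw [abs_of_nonneg dist_nonneg]
    exact hdist i
  calc _ ≤ (∑ i, |w i - w' i|) * D + ‖z - z'‖ :=
        abs_sum_mul_sub_sum_mul_le (fun i _ => hw' i) hw's hbound hmove
    _ ≤ α * ‖z - z'‖ * D + ‖z - z'‖ := by gcongr
    _ = (1 + α * D) * ‖z - z'‖ := by ring

/-- If the weight vectors satisfy `‖w − w'‖₁ ≤ α‖z − z'‖` and all data points lie within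
distance `D` of `(x,z)`, then the bias terms satisfy
`|B(x,z) − B(x,z')| ≤ (1 + αD)‖z − z'‖`. -/
theorem abs_sub_bias_le_of_weights {d p n : ℕ} (w w' : Fin n → ℝ)
    (hw : ∀ i, 0 ≤ w i) (hw' : ∀ i, 0 ≤ w' i)
    (hws : ∑ i, w i = 1) (hw's : ∑ i, w' i = 1)
    (X : Fin n → EuclideanSpace ℝ (Fin d)) (Z : Fin n → EuclideanSpace ℝ (Fin p))
    (x : EuclideanSpace ℝ (Fin d)) (z z' : EuclideanSpace ℝ (Fin p))
    (α D : ℝ) (hα : 0 ≤ α) (hD : 0 ≤ D)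
    (hdist : ∀ i, dist (pr (X i) (Z i)) (pr x z) ≤ D)
    (hl1 : ∑ i, |w i - w' i| ≤ α * ‖z - z'‖) :
    |(∑ i, w i * dist (pr (X i) (Z i)) (pr x z)) -
        ∑ i, w' i * dist (pr (X i) (Z i)) (pr x z')| ≤ (1 + α * D) * ‖z - z'‖ :=
  abs_sub_bias_le_of_weights_general w w' hw' hw's X Z x z z' α D hD hdist hl1
end

section
/- In the (m+1)-action two-state bandit example of the paper, with uncertainty penalty λ√(ln m / m) for λ ≥ √2, the Bayesian expected regrets satisfy E[R^{UP}] = o(E[R^{PCM}]) as m → ∞; i.e., the ratio E[R^{UP}]/E[R^{PCM}] tends to 0. -/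
open MeasureTheory ProbabilityTheory Filter

/-!
Condition on the state and write `t = λ √(ln m / m)`. On `A`, `UP` leaves action `0` only if
some empirical mean falls below `-t`; a union bound over `m` Gaussian tails gives
`m e^{-m(1+t)²/2}`. On `Aᶜ`, `UP` keeps action `0` only if all `m` independent means exceed
`1 - t`, which has probability at most `e^{-m²(1-t)²/2}`. On the other hand `PCM` errs on `A` as
soon as one mean is negative, which has probability at least `e^{-(√m+1)²/2} / √(2π)`. Since
`m t = λ √(m ln m)` dominates `√m + ln m`, the ratio of the two regrets tends to `0`.
-/

open Real Set
open scoped NNReal Topology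

lemma hasSubgaussianMGF_of_map_eq_gaussianReal {Ω : Type*} [MeasurableSpace Ω] {P : Measure Ω}
    [IsProbabilityMeasure P] {X : Ω → ℝ} {v : ℝ≥0} (hX : P.map X = gaussianReal 0 v) :
    HasSubgaussianMGF X v P where
  integrable_exp_mul t := by
    rw [← mgf_pos_iff, mgf_gaussianReal hX]
    exact exp_pos _
  mgf_le t := by simp [mgf_gaussianReal hX]

lemma gaussianReal_real_Ici_le (μ : ℝ) (v : ℝ≥0) {a : ℝ} (ha : 0 ≤ a) :
    (gaussianReal μ v).real (Ici (μ + a)) ≤ exp (-a ^ 2 / (2 * v)) := by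
  have hX : (gaussianReal μ v).map (· - μ) = gaussianReal 0 v := by
    simpa using gaussianReal_map_sub_const (μ := μ) (v := v) μ
  convert (hasSubgaussianMGF_of_map_eq_gaussianReal hX).measure_ge_le ha using 3
  ext x
  simp [le_sub_iff_add_le']

lemma gaussianReal_real_Iic_le (μ : ℝ) (v : ℝ≥0) {a : ℝ} (ha : 0 ≤ a) :
    (gaussianReal μ v).real (Iic (μ - a)) ≤ exp (-a ^ 2 / (2 * v)) := by
  have hX : (gaussianReal μ v).map (μ - ·) = gaussianReal 0 v := by
    simpa using gaussianReal_map_const_sub (μ := μ) (v := v) μ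
  convert (hasSubgaussianMGF_of_map_eq_gaussianReal hX).measure_ge_le ha using 3
  ext x
  simp [le_sub_comm]

/-- On an interval of length `√v` the density stays above its value at distance `a + √v`
from the mean. -/
lemma le_gaussianReal_real_Iio (μ : ℝ) {v : ℝ≥0} (hv : v ≠ 0) {a : ℝ} (ha : 0 ≤ a) :
    (√(2 * π))⁻¹ * exp (-(a + √v) ^ 2 / (2 * v)) ≤ (gaussianReal μ v).real (Iio (μ - a)) := by
  have hv' : (0 : ℝ) < v := by positivity
  have hpdf : ∀ x ∈ Ioo (μ - a - √v) (μ - a),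
      (√(2 * π * v))⁻¹ * exp (-(a + √v) ^ 2 / (2 * v)) ≤ gaussianPDFReal μ v x := by
    intro x hx
    have hsq : (x - μ) ^ 2 ≤ (a + √v) ^ 2 := by nlinarith [hx.1, hx.2, sqrt_nonneg (v : ℝ)]
    rw [gaussianPDFReal]
    gcongr _ * exp (-?_ / _)
  have hint := integrable_gaussianPDFReal μ v
  calc (√(2 * π))⁻¹ * exp (-(a + √v) ^ 2 / (2 * v))
      = volume.real (Ioo (μ - a - √v) (μ - a)) •
          ((√(2 * π * v))⁻¹ * exp (-(a + √v) ^ 2 / (2 * v))) := by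
        rw [Real.volume_real_Ioo, sub_sub_cancel, max_eq_left (sqrt_nonneg _), smul_eq_mul,
          sqrt_mul' _ hv'.le, mul_inv]
        field_simp
    _ ≤ ∫ x in Ioo (μ - a - √v) (μ - a), gaussianPDFReal μ v x :=
        setIntegral_ge_of_const_le measurableSet_Ioo (by simp) hpdf hint.integrableOn
    _ ≤ ∫ x in Iio (μ - a), gaussianPDFReal μ v x :=
        setIntegral_mono_set hint.integrableOn (ae_of_all _ (gaussianPDFReal_nonneg μ v))
          (ae_of_all _ Ioo_subset_Iio_self)
    _ = (gaussianReal μ v).real (Iio (μ - a)) := by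
        rw [measureReal_def, gaussianReal_apply_eq_integral μ hv, ENNReal.toReal_ofReal
          (setIntegral_nonneg measurableSet_Iio fun x _ => gaussianPDFReal_nonneg μ v x)]

lemma measureReal_mono_ae {Ω : Type*} [MeasurableSpace Ω] {P : Measure Ω} [IsFiniteMeasure P]
    {s t : Set Ω} (h : s ≤ᵐ[P] t) : P.real s ≤ P.real t :=
  ENNReal.toReal_mono (measure_ne_top P t) (measure_mono_ae h)

section SelectionRules

variable {Ω : Type*} [MeasurableSpace Ω] {P : Measure Ω} [IsFiniteMeasure P] {k : ℕ}
  {muhat : Fin (k + 1) → Ω → ℝ} {v : ℝ≥0} {t : ℝ} {g : Ω → Fin (k + 1)}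

lemma measureReal_rule_ne_zero_le (hmu : ∀ j, Measurable (muhat j))
    (hlaw : ∀ j ≠ 0, P.map (muhat j) = gaussianReal 1 v) (h0 : ∀ᵐ ω ∂P, muhat 0 ω = 0)
    (ht : 0 ≤ t) (hg : ∀ ω, g ω ≠ 0 → muhat (g ω) ω + t ≤ muhat 0 ω) :
    P.real {ω | g ω ≠ 0} ≤ k * exp (-(1 + t) ^ 2 / (2 * v)) := by
  have hsub : {ω | g ω ≠ 0} ≤ᵐ[P] ⋃ j ∈ Finset.univ.erase 0, muhat j ⁻¹' Iic (1 - (1 + t)) := by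
    filter_upwards [h0] with ω hω (hgω : g ω ≠ 0)
    refine mem_iUnion₂.2 ⟨g ω, Finset.mem_erase.2 ⟨hgω, Finset.mem_univ _⟩, ?_⟩
    show muhat (g ω) ω ≤ 1 - (1 + t)
    linarith [hg ω hgω]
  calc P.real {ω | g ω ≠ 0}
      ≤ ∑ j ∈ Finset.univ.erase 0, P.real (muhat j ⁻¹' Iic (1 - (1 + t))) :=
        (measureReal_mono_ae hsub).trans (measureReal_biUnion_finset_le _ _)
    _ ≤ ∑ j ∈ Finset.univ.erase (0 : Fin (k + 1)), exp (-(1 + t) ^ 2 / (2 * v)) := by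
        refine Finset.sum_le_sum fun j hj => ?_
        rw [← map_measureReal_apply (hmu j) measurableSet_Iic, hlaw j (Finset.ne_of_mem_erase hj)]
        exact gaussianReal_real_Iic_le 1 v (by linarith)
    _ = k * exp (-(1 + t) ^ 2 / (2 * v)) := by simp

lemma measureReal_rule_eq_zero_le (hmu : ∀ j, Measurable (muhat j)) (hind : iIndepFun muhat P)
    (hlaw : ∀ j ≠ 0, P.map (muhat j) = gaussianReal 0 v) (h0 : ∀ᵐ ω ∂P, muhat 0 ω = 1)
    (ht : t ≤ 1) (hg : ∀ ω, g ω = 0 → ∀ j ≠ 0, muhat 0 ω - t ≤ muhat j ω) :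
    P.real {ω | g ω = 0} ≤ exp (-(1 - t) ^ 2 / (2 * v)) ^ k := by
  have hsub : {ω | g ω = 0} ≤ᵐ[P] ⋂ j ∈ Finset.univ.erase 0, muhat j ⁻¹' Ici (0 + (1 - t)) := by
    filter_upwards [h0] with ω hω (hgω : g ω = 0)
    refine mem_iInter₂.2 fun j hj => ?_
    show 0 + (1 - t) ≤ muhat j ω
    linarith [hg ω hgω j (Finset.ne_of_mem_erase hj)]
  calc P.real {ω | g ω = 0}
      ≤ ∏ j ∈ Finset.univ.erase 0, P.real (muhat j ⁻¹' Ici (0 + (1 - t))) := by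
        refine (measureReal_mono_ae hsub).trans_eq ?_
        rw [measureReal_def, hind.measure_inter_preimage_eq_mul _ fun _ _ => measurableSet_Ici,
          ENNReal.toReal_prod]
        rfl
    _ ≤ ∏ j ∈ Finset.univ.erase (0 : Fin (k + 1)), exp (-(1 - t) ^ 2 / (2 * v)) := by
        refine Finset.prod_le_prod (fun _ _ => measureReal_nonneg) fun j hj => ?_
        rw [← map_measureReal_apply (hmu j) measurableSet_Ici, hlaw j (Finset.ne_of_mem_erase hj)]
        exact gaussianReal_real_Ici_le 0 v (by linarith)
    _ = exp (-(1 - t) ^ 2 / (2 * v)) ^ k := by simp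

lemma le_measureReal_rule_ne_zero {j : Fin (k + 1)} (hmu : Measurable (muhat j))
    (hlaw : P.map (muhat j) = gaussianReal 1 v) (hv : v ≠ 0) (h0 : ∀ᵐ ω ∂P, muhat 0 ω = 0)
    (hg : ∀ ω, muhat (g ω) ω ≤ muhat j ω) :
    (√(2 * π))⁻¹ * exp (-(1 + √v) ^ 2 / (2 * v)) ≤ P.real {ω | g ω ≠ 0} := by
  have hsub : muhat j ⁻¹' Iio (1 - 1) ≤ᵐ[P] {ω | g ω ≠ 0} := by
    filter_upwards [h0] with ω hω (hjω : muhat j ω < 1 - 1) (hgω : g ω = 0)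
    have hgj := hg ω
    rw [hgω, hω] at hgj
    linarith
  calc (√(2 * π))⁻¹ * exp (-(1 + √v) ^ 2 / (2 * v))
      ≤ (gaussianReal 1 v).real (Iio (1 - 1)) := le_gaussianReal_real_Iio 1 hv zero_le_one
    _ = P.real (muhat j ⁻¹' Iio (1 - 1)) := by
        rw [← hlaw, map_measureReal_apply hmu measurableSet_Iio]
    _ ≤ P.real {ω | g ω ≠ 0} := measureReal_mono_ae hsub

end SelectionRules

lemma measureReal_inter_eq_mul_cond {Ω : Type*} [MeasurableSpace Ω] (μ : Measure Ω)
    [IsFiniteMeasure μ] {s : Set Ω} (hs : MeasurableSet s) (t : Set Ω) :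
    μ.real (s ∩ t) = μ.real s * μ[|s].real t := by
  rw [measureReal_def, ← cond_mul_eq_inter hs, ENNReal.toReal_mul, mul_comm]
  rfl

noncomputable def bayesRegret {Ω : Type*} [MeasureSpace Ω] (A : Set Ω) {k : ℕ}
    (g : Ω → Fin (k + 1)) : ℝ :=
  ∫ ω, (A.indicator (fun _ => if g ω = 0 then (0 : ℝ) else 1) ω +
    Aᶜ.indicator (fun _ => if g ω = 0 then (1 : ℝ) else 0) ω)

section BayesRegret

variable {Ω : Type*} [MeasureSpace Ω] {A : Set Ω} {k : ℕ} {g : Ω → Fin (k + 1)}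

lemma bayesRegret_nonneg : 0 ≤ bayesRegret A g :=
  integral_nonneg fun ω => add_nonneg
    (indicator_nonneg (fun _ _ => by split_ifs <;> norm_num) ω)
    (indicator_nonneg (fun _ _ => by split_ifs <;> norm_num) ω)

lemma bayesRegret_eq [IsFiniteMeasure (ℙ : Measure Ω)] (hA : MeasurableSet A)
    (hg : Measurable g) :
    bayesRegret A g =
      (ℙ).real A * ℙ[|A].real {ω | g ω ≠ 0} + (ℙ).real Aᶜ * ℙ[|Aᶜ].real {ω | g ω = 0} := by
  have hg0 : MeasurableSet {ω | g ω = 0} := hg (measurableSet_singleton 0)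
  have hg0c : MeasurableSet {ω | g ω ≠ 0} := hg0.compl
  have hindicator : (fun ω => A.indicator (fun _ => if g ω = 0 then (0 : ℝ) else 1) ω +
      Aᶜ.indicator (fun _ => if g ω = 0 then (1 : ℝ) else 0) ω) =
      (A ∩ {ω | g ω ≠ 0}).indicator 1 + (Aᶜ ∩ {ω | g ω = 0}).indicator 1 := by
    ext ω
    by_cases hω : ω ∈ A <;> by_cases h : g ω = 0 <;> simp [hω, h]
  rw [bayesRegret, hindicator, integral_add' ((integrable_const 1).indicator (hA.inter hg0c))
      ((integrable_const 1).indicator (hA.compl.inter hg0)),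
    integral_indicator_one (hA.inter hg0c), integral_indicator_one (hA.compl.inter hg0),
    measureReal_inter_eq_mul_cond _ hA, measureReal_inter_eq_mul_cond _ hA.compl]

end BayesRegret

/-- Upper bound for `2 E[R^UP]` over lower bound for `2 E[R^PCM]`, with `x` samples per action
and penalty `t`. -/
noncomputable def regretRatioBound (x t : ℝ) : ℝ :=
  (x * exp (-x * (1 + t) ^ 2 / 2) + exp (-(x * (1 - t)) ^ 2 / 2)) /
    ((√(2 * π))⁻¹ * exp (-(√x + 1) ^ 2 / 2))

lemma regretRatioBound_nonneg {x : ℝ} (hx : 0 ≤ x) (t : ℝ) : 0 ≤ regretRatioBound x t := by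
  unfold regretRatioBound
  positivity

lemma regretRatioBound_le {x t : ℝ} (hx : 1 ≤ x) (ht : t ≤ 1 / 2) :
    regretRatioBound x t ≤
      √(2 * π) * (exp (log x + √x + 1 / 2 - x * t) + exp (-x ^ 2 / 8 + x + 1)) := by
  have hx0 : 0 < x := by linarith
  have hsq : √x ^ 2 = x := sq_sqrt hx0.le
  have h1 : log x + -x * (1 + t) ^ 2 / 2 + (√x + 1) ^ 2 / 2 ≤ log x + √x + 1 / 2 - x * t := by
    nlinarith [mul_nonneg hx0.le (sq_nonneg t)]
  have h2 : -(x * (1 - t)) ^ 2 / 2 + (√x + 1) ^ 2 / 2 ≤ -x ^ 2 / 8 + x + 1 := by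
    nlinarith [sq_nonneg (√x - 1), mul_le_mul_of_nonneg_left
      (show 1 / 4 ≤ (1 - t) ^ 2 by nlinarith) (sq_nonneg x)]
  calc regretRatioBound x t
      = √(2 * π) * (exp (log x + -x * (1 + t) ^ 2 / 2 + (√x + 1) ^ 2 / 2) +
          exp (-(x * (1 - t)) ^ 2 / 2 + (√x + 1) ^ 2 / 2)) := by
        rw [regretRatioBound, neg_div (2 : ℝ) ((√x + 1) ^ 2), exp_neg]
        simp only [exp_add, exp_log hx0]
        field_simp
    _ ≤ _ := by gcongr

lemma tendsto_penalty (lam : ℝ) : Tendsto (fun x => lam * √(log x / x)) atTop (𝓝 0) := by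
  simpa using ((continuous_sqrt.tendsto 0).comp
    isLittleO_log_id_atTop.tendsto_div_nhds_zero).const_mul lam

lemma tendsto_log_add_sqrt_sub_mul_penalty_atBot {lam : ℝ} (hlam : 0 < lam) :
    Tendsto (fun x => log x + √x + 1 / 2 - x * (lam * √(log x / x))) atTop atBot := by
  have hlim : Tendsto (fun x => √x * (3 - lam * √(log x))) atTop atBot :=
    tendsto_sqrt_atTop.atTop_mul_atBot₀ (tendsto_atBot_add_const_left _ 3
      (tendsto_neg_atTop_atBot.comp
        ((tendsto_sqrt_atTop.comp tendsto_log_atTop).const_mul_atTop hlam)))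
  refine tendsto_atBot_mono' atTop ?_ hlim
  filter_upwards [eventually_ge_atTop 1] with x hx
  have hx0 : 0 < x := by linarith
  have hlog : log x ≤ 2 * √x - 2 := by
    have := log_le_sub_one_of_pos (sqrt_pos.2 hx0)
    rw [log_sqrt hx0.le] at this
    linarith
  have hmul : x * (lam * √(log x / x)) = √x * (lam * √(log x)) := by
    rw [sqrt_div' _ hx0.le]
    field_simp
    rw [sq_sqrt hx0.le, mul_comm]
  rw [hmul]
  nlinarith

lemma tendsto_neg_sq_div_add_atBot :
    Tendsto (fun x : ℝ => -x ^ 2 / 8 + x + 1) atTop atBot := by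
  have hlim : Tendsto (fun x : ℝ => x * (1 - x / 8) + 1) atTop atBot :=
    tendsto_atBot_add_const_right _ 1 (tendsto_id.atTop_mul_atBot₀
      (tendsto_atBot_add_const_left _ 1 (tendsto_neg_atTop_atBot.comp
        (tendsto_id.atTop_div_const (by norm_num)))))
  refine hlim.congr fun x => ?_
  ring

lemma tendsto_regretRatioBound {lam : ℝ} (hlam : 0 < lam) :
    Tendsto (fun x => regretRatioBound x (lam * √(log x / x))) atTop (𝓝 0) := by
  have hlim := ((tendsto_exp_atBot.comp (tendsto_log_add_sqrt_sub_mul_penalty_atBot hlam)).add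
    (tendsto_exp_atBot.comp tendsto_neg_sq_div_add_atBot)).const_mul (√(2 * π))
  rw [add_zero, mul_zero] at hlim
  refine squeeze_zero' ?_ ?_ hlim
  · filter_upwards [eventually_ge_atTop 0] with x hx
    exact regretRatioBound_nonneg hx _
  · filter_upwards [eventually_ge_atTop 1,
      (tendsto_penalty lam).eventually_le_const (by norm_num : (0 : ℝ) < 1 / 2)] with x hx ht
    exact regretRatioBound_le hx ht

theorem bayesRegret_div_le_regretRatioBound {Ω : Type*} [MeasureSpace Ω]
    [IsProbabilityMeasure (ℙ : Measure Ω)] {A : Set Ω} (hA : MeasurableSet A)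
    (hAhalf : ℙ A = 1 / 2) {m : ℕ} (hm : 1 ≤ m) {muhat : Fin (m + 1) → Ω → ℝ}
    (hmuMeas : ∀ j, Measurable (muhat j))
    (hmu0 : ∀ ω, muhat 0 ω = Aᶜ.indicator (fun _ => (1 : ℝ)) ω)
    (hmuA : ∀ j ≠ 0, ℙ[|A].map (muhat j) = gaussianReal 1 (m : ℝ≥0)⁻¹)
    (hmuAc : ∀ j ≠ 0, ℙ[|Aᶜ].map (muhat j) = gaussianReal 0 (m : ℝ≥0)⁻¹)
    (hindAc : iIndepFun muhat ℙ[|Aᶜ]) {t : ℝ} (ht0 : 0 ≤ t) (ht1 : t ≤ 1)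
    {PCM UP : Ω → Fin (m + 1)} (hPCMmeas : Measurable PCM)
    (hPCM : ∀ ω j, muhat (PCM ω) ω ≤ muhat j ω) (hUPmeas : Measurable UP)
    (hUP : ∀ ω j, muhat (UP ω) ω + (if UP ω = 0 then 0 else t) ≤
      muhat j ω + (if j = 0 then 0 else t)) :
    bayesRegret A UP / bayesRegret A PCM ≤ regretRatioBound m t := by
  have hm0 : (0 : ℝ) < m := by exact_mod_cast hm
  have hv : (m : ℝ≥0)⁻¹ ≠ 0 := inv_ne_zero (by exact_mod_cast hm0.ne')
  have h0A : ∀ᵐ ω ∂ℙ[|A], muhat 0 ω = 0 :=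
    (ae_cond_mem hA).mono fun ω hω => by simp [hmu0, hω]
  have h0Ac : ∀ᵐ ω ∂ℙ[|Aᶜ], muhat 0 ω = 1 :=
    (ae_cond_mem hA.compl).mono fun ω hω => by simp [hmu0, hω]
  have hUPA := measureReal_rule_ne_zero_le (g := UP) hmuMeas hmuA h0A ht0 fun ω hω => by
    simpa [hω] using hUP ω 0
  have hUPAc := measureReal_rule_eq_zero_le (g := UP) hmuMeas hindAc hmuAc h0Ac ht1
    fun ω hω j hj => by simpa [hω, hj] using hUP ω j
  have hPCMA := le_measureReal_rule_ne_zero (g := PCM) (hmuMeas (Fin.last m))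
    (hmuA _ (Fin.val_ne_zero_iff.mp (by simpa using hm0.ne'))) hv h0A fun ω => hPCM ω _
  have hhalf : (ℙ).real A = 1 / 2 := by simp [measureReal_def, hAhalf]
  have hchalf : (ℙ).real Aᶜ = 1 / 2 := by rw [measureReal_compl hA, hhalf]; norm_num
  rw [bayesRegret_eq hA hUPmeas, bayesRegret_eq hA hPCMmeas, hhalf, hchalf, ← mul_add,
    ← mul_add, mul_div_mul_left _ _ (by norm_num), regretRatioBound]
  have hvm : (((m : ℝ≥0)⁻¹ : ℝ≥0) : ℝ) = (m : ℝ)⁻¹ := by simp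
  have hexp1 : -(1 + t) ^ 2 / (2 * (m : ℝ)⁻¹) = -m * (1 + t) ^ 2 / 2 := by field_simp
  have hexp2 : exp (-(1 - t) ^ 2 / (2 * (m : ℝ)⁻¹)) ^ m = exp (-(m * (1 - t)) ^ 2 / 2) := by
    rw [← exp_nat_mul]
    field_simp
  have hexp3 : -(1 + √(m : ℝ)⁻¹) ^ 2 / (2 * (m : ℝ)⁻¹) = -(√m + 1) ^ 2 / 2 := by
    have hsqrt : √(m : ℝ) ≠ 0 := by positivity
    rw [sqrt_inv]
    field_simp
    rw [sq_sqrt hm0.le]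
  rw [hvm, hexp1] at hUPA
  rw [hvm, hexp2] at hUPAc
  rw [hvm, hexp3] at hPCMA
  exact div_le_div₀ (by positivity) (add_le_add hUPA hUPAc) (by positivity)
    (hPCMA.trans (le_add_of_nonneg_right measureReal_nonneg))

theorem bandit_example_up_beats_pcm_general
    (Ω : ℕ → Type*) [∀ m, MeasureSpace (Ω m)] [∀ m, IsProbabilityMeasure (ℙ : Measure (Ω m))]
    (A : ∀ m, Set (Ω m)) (hAmeas : ∀ m, MeasurableSet (A m))
    (hAhalf : ∀ m, ℙ (A m) = 1 / 2)
    (muhat : ∀ m, Fin (m + 1) → Ω m → ℝ) (hmuMeas : ∀ m j, Measurable (muhat m j))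
    -- the empirical mean cost of the deterministic action 0
    (hmu0 : ∀ m ω, muhat m 0 ω = (A m)ᶜ.indicator (fun _ => (1 : ℝ)) ω)
    -- conditional distributions of the empirical mean costs of actions `j ≥ 1`
    (hmuA : ∀ m, 1 ≤ m → ∀ j : Fin (m + 1), j ≠ 0 →
      Measure.map (muhat m j) (ProbabilityTheory.cond ℙ (A m)) =
        gaussianReal 1 ((m : NNReal))⁻¹)
    (hmuAc : ∀ m, 1 ≤ m → ∀ j : Fin (m + 1), j ≠ 0 →
      Measure.map (muhat m j) (ProbabilityTheory.cond ℙ (A m)ᶜ) =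
        gaussianReal 0 ((m : NNReal))⁻¹)
    -- conditional independence of the empirical means across actions
    (hindAc : ∀ m, iIndepFun (muhat m)
      (ProbabilityTheory.cond ℙ (A m)ᶜ))
    -- the penalty parameter
    (lam : ℝ) (hlam : Real.sqrt 2 ≤ lam)
    -- the predicted-cost-minimizing and uncertainty-penalizing selection rules
    (PCM : ∀ m, Ω m → Fin (m + 1)) (hPCMmeas : ∀ m, Measurable (PCM m))
    (hPCM : ∀ m ω (j : Fin (m + 1)), muhat m (PCM m ω) ω ≤ muhat m j ω)
    (UP : ∀ m, Ω m → Fin (m + 1)) (hUPmeas : ∀ m, Measurable (UP m))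
    (hUP : ∀ m ω (j : Fin (m + 1)),
      muhat m (UP m ω) ω +
          (if UP m ω = 0 then 0 else lam * Real.sqrt (Real.log m / m)) ≤
        muhat m j ω + (if j = 0 then 0 else lam * Real.sqrt (Real.log m / m))) :
    -- conclusion: the ratio of Bayesian expected regrets tends to `0`
    Tendsto (fun m =>
        (∫ ω, ((A m).indicator (fun _ => if UP m ω = 0 then (0 : ℝ) else 1) ω +
            (A m)ᶜ.indicator (fun _ => if UP m ω = 0 then (1 : ℝ) else 0) ω)) /
        (∫ ω, ((A m).indicator (fun _ => if PCM m ω = 0 then (0 : ℝ) else 1) ω +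
            (A m)ᶜ.indicator (fun _ => if PCM m ω = 0 then (1 : ℝ) else 0) ω)))
      atTop (nhds 0) := by
  show Tendsto (fun m => bayesRegret (A m) (UP m) / bayesRegret (A m) (PCM m)) atTop (𝓝 0)
  have hlam0 : 0 < lam := (sqrt_pos.2 two_pos).trans_le hlam
  have hpenalty := (tendsto_penalty lam).comp tendsto_natCast_atTop_atTop
  refine squeeze_zero' (Eventually.of_forall fun m => div_nonneg bayesRegret_nonneg
    bayesRegret_nonneg) ?_ ((tendsto_regretRatioBound hlam0).comp tendsto_natCast_atTop_atTop)
  filter_upwards [eventually_ge_atTop 1, hpenalty.eventually_le_const one_pos] with m hm ht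
  exact bayesRegret_div_le_regretRatioBound (hAmeas m) (hAhalf m) hm (hmuMeas m) (hmu0 m)
    (hmuA m hm) (hmuAc m hm) (hindAc m) (mul_nonneg hlam0.le (sqrt_nonneg _)) ht (hPCMmeas m)
    (hPCM m) (hUPmeas m) (hUP m)

/-- **The two-state bandit example** (Example 1). There are `m+1` actions and two equally
probable states of the world (the event `A` and its complement). In state `A`, action `0`
has deterministic cost `0` and actions `1,…,m` have i.i.d. `N(1,1)` costs; in state `Aᶜ`,
action `0` has deterministic cost `1` and actions `1,…,m` have i.i.d. `N(0,1)` costs.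
The training data consists of `m` samples of each action, so the empirical mean `μ̂(j)` of
action `j ≥ 1` is conditionally `N(1, 1/m)` (on `A`) resp. `N(0, 1/m)` (on `Aᶜ`), while
`μ̂(0)` equals the deterministic cost. `PCM` selects `argmin_j μ̂(j)`, while `UP` selects
`argmin_j μ̂(j) + λ√(σ_j² ln m / m)` with `σ₀ = 0`, `σ_j = 1` for `j ≥ 1`. If `λ ≥ √2`,
then the Bayesian expected regrets satisfy `E[R^{UP}] = o(E[R^{PCM}])` as `m → ∞`. -/
theorem bandit_example_up_beats_pcm
    (Ω : ℕ → Type*) [∀ m, MeasureSpace (Ω m)] [∀ m, IsProbabilityMeasure (ℙ : Measure (Ω m))]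
    (A : ∀ m, Set (Ω m)) (hAmeas : ∀ m, MeasurableSet (A m))
    (hAhalf : ∀ m, ℙ (A m) = 1 / 2)
    (muhat : ∀ m, Fin (m + 1) → Ω m → ℝ) (hmuMeas : ∀ m j, Measurable (muhat m j))
    -- the empirical mean cost of the deterministic action 0
    (hmu0 : ∀ m ω, muhat m 0 ω = (A m)ᶜ.indicator (fun _ => (1 : ℝ)) ω)
    -- conditional distributions of the empirical mean costs of actions `j ≥ 1`
    (hmuA : ∀ m, 1 ≤ m → ∀ j : Fin (m + 1), j ≠ 0 →
      Measure.map (muhat m j) (ProbabilityTheory.cond ℙ (A m)) =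
        gaussianReal 1 ((m : NNReal))⁻¹)
    (hmuAc : ∀ m, 1 ≤ m → ∀ j : Fin (m + 1), j ≠ 0 →
      Measure.map (muhat m j) (ProbabilityTheory.cond ℙ (A m)ᶜ) =
        gaussianReal 0 ((m : NNReal))⁻¹)
    -- conditional independence of the empirical means across actions
    (hindA : ∀ m, iIndepFun (muhat m)
      (ProbabilityTheory.cond ℙ (A m)))
    (hindAc : ∀ m, iIndepFun (muhat m)
      (ProbabilityTheory.cond ℙ (A m)ᶜ))
    -- the penalty parameter
    (lam : ℝ) (hlam : Real.sqrt 2 ≤ lam)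
    -- the predicted-cost-minimizing and uncertainty-penalizing selection rules
    (PCM : ∀ m, Ω m → Fin (m + 1)) (hPCMmeas : ∀ m, Measurable (PCM m))
    (hPCM : ∀ m ω (j : Fin (m + 1)), muhat m (PCM m ω) ω ≤ muhat m j ω)
    (UP : ∀ m, Ω m → Fin (m + 1)) (hUPmeas : ∀ m, Measurable (UP m))
    (hUP : ∀ m ω (j : Fin (m + 1)),
      muhat m (UP m ω) ω +
          (if UP m ω = 0 then 0 else lam * Real.sqrt (Real.log m / m)) ≤
        muhat m j ω + (if j = 0 then 0 else lam * Real.sqrt (Real.log m / m))) :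
    -- conclusion: the ratio of Bayesian expected regrets tends to `0`
    Tendsto (fun m =>
        (∫ ω, ((A m).indicator (fun _ => if UP m ω = 0 then (0 : ℝ) else 1) ω +
            (A m)ᶜ.indicator (fun _ => if UP m ω = 0 then (1 : ℝ) else 0) ω)) /
        (∫ ω, ((A m).indicator (fun _ => if PCM m ω = 0 then (0 : ℝ) else 1) ω +
            (A m)ᶜ.indicator (fun _ => if PCM m ω = 0 then (1 : ℝ) else 0) ω)))
      atTop (nhds 0) :=
  bandit_example_up_beats_pcm_general Ω A hAmeas hAhalf muhat hmuMeas hmu0 hmuA hmuAc hindAc lam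
    hlam PCM hPCMmeas hPCM UP hUPmeas hUP
end
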